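/- arXiv:1402.2040 — 2 statements merged into one kernel-verified Lean document; each statement's English description precedes it below -/
import Mathlib

section
/- Let k ≥ 1, let q = (q_1,…,q_n) be nonnegative reals, and let a = (a_1,…,a_n), b = (b_1,…,b_n) be non-increasing n-tuples of nonnegative integers such that Σ_{i=1}^{j} q_i a_i ≥ Σ_{i=1}^{j} q_i b_i for 1 ≤ j ≤ n−1 and Σ_{i=1}^{n} q_i a_i = Σ_{i=1}^{n} q_i b_i. Then Π_{i=1}^{n} [S(a_i+k,k)/C(a_i+k,k)]^{q_i} ≥ Π_{i=1}^{n} [S(b_i+k,k)/C(b_i+k,k)]^{q_i}. -/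
/-!
The ratio `S(m+k,k)/C(m+k,k)` is the `m`-th moment `E[(U₁ + ⋯ + U_k)^m]` of a sum of `k`
independent uniform variables on `[0,1]`: integrating out one variable gives a binomial recursion
in `k` which matches the identity `(k+1) S(m+k+1,k+1) = ∑_{i+j=m} C(m+k+1,i+k) S(i+k,k)`.
Moments of a nonnegative variable are log-convex (Cauchy–Schwarz), so `m ↦ log (S(m+k,k)/C(m+k,k))`
is convex on `ℕ`. A convex function on `ℕ` is an affine function plus a nonnegative combination of
hinges `x ↦ (x - t)₊`, and when `b` is non-increasing the weighted majorization `a ⪰_q b` gives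
`∑ qᵢ (bᵢ - t)₊ ≤ ∑ qᵢ (aᵢ - t)₊` for every `t` (Fuchs' form of Karamata's inequality).
-/

/-- Stirling numbers of the second kind. -/
def S : ℕ → ℕ → ℕ
  | 0, 0 => 1
  | 0, _ + 1 => 0
  | _ + 1, 0 => 0
  | n + 1, k + 1 => (k + 1) * S n (k + 1) + S n k

open Finset MeasureTheory unitInterval
open scoped Nat

theorem S_eq_stirlingSecond : S = Nat.stirlingSecond := by
  funext n k
  induction n generalizing k with
  | zero => cases k <;> rfl
  | succ n ih => cases k <;> simp [S, Nat.stirlingSecond, ih]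

namespace Nat

theorem stirlingSecond_succ_succ_eq_sum (N k : ℕ) :
    stirlingSecond (N + 1) (k + 1) = ∑ i ∈ range (N + 1), N.choose i * stirlingSecond i k := by
  induction N generalizing k with
  | zero => cases k <;> rfl
  | succ N ih =>
    have h : ∑ i ∈ range (N + 1), N.choose (i + 1) * stirlingSecond (i + 1) k + stirlingSecond 0 k
        = stirlingSecond (N + 1) (k + 1) := by
      have := (sum_range_succ' (fun i => N.choose i * stirlingSecond i k) (N + 1)).symm.trans
        (sum_range_succ _ _)
      rw [choose_zero_right, one_mul, choose_succ_self, zero_mul, add_zero] at this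
      rw [this, ih]
    rw [sum_range_succ', choose_zero_right, one_mul]
    simp only [choose_succ_succ', add_mul, sum_add_distrib]
    rw [add_assoc (∑ i ∈ range (N + 1), _), h]
    cases k with
    | zero => simp [stirlingSecond_one_right]
    | succ k =>
      have e : ∑ i ∈ range (N + 1), N.choose i * stirlingSecond (i + 1) (k + 1)
          = (k + 1) * stirlingSecond (N + 1) (k + 2) + stirlingSecond (N + 1) (k + 1) := by
        rw [ih, ih, mul_sum, ← sum_add_distrib]
        refine sum_congr rfl fun i _ => ?_
        rw [stirlingSecond_succ_succ]
        ring
      rw [e, stirlingSecond_succ_succ (N + 1) (k + 1)]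
      ring

theorem succ_mul_stirlingSecond_add_succ (m k : ℕ) :
    (k + 1) * stirlingSecond (m + k + 1) (k + 1) =
      ∑ p ∈ antidiagonal m, (m + k + 1).choose (p.1 + k) * stirlingSecond (p.1 + k) k := by
  have h := stirlingSecond_succ_succ_eq_sum (m + k + 1) k
  rw [stirlingSecond_succ_succ, sum_range_succ, choose_self, one_mul, add_left_inj] at h
  rw [h, Nat.sum_antidiagonal_eq_sum_range_succ
      (fun i _ => (m + k + 1).choose (i + k) * stirlingSecond (i + k) k),
    show m + k + 1 = k + (m + 1) by ring, sum_range_add, sum_eq_zero, zero_add]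
  · simp only [add_comm k]
  · intro i hi
    rw [stirlingSecond_eq_zero_of_lt (mem_range.mp hi), mul_zero]

theorem stirlingSecond_add_succ_pos (m k : ℕ) : 0 < stirlingSecond (m + k + 1) (k + 1) := by
  induction m with
  | zero => simp [stirlingSecond_self]
  | succ m ih =>
    rw [show m + 1 + k + 1 = (m + k + 1) + 1 by ring, stirlingSecond_succ_succ]
    positivity

end Nat

theorem Nat.cast_sub_le_cast_tsub {R : Type*} [Ring R] [PartialOrder R] [IsOrderedRing R]
    (a b : ℕ) : (a : R) - b ≤ ((a - b : ℕ) : R) := by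
  rw [sub_le_iff_le_add, ← Nat.cast_add]
  exact Nat.mono_cast le_tsub_add

/-- The truncated subtraction `x - (t + 1)` in `ℕ` is the hinge `(x - t - 1)₊`. -/
theorem eq_affine_add_sum_hinge (g : ℕ → ℝ) (x : ℕ) :
    g x = g 0 + x * (g 1 - g 0) +
      ∑ t ∈ range x, (g (t + 2) - 2 * g (t + 1) + g t) * ((x - (t + 1) : ℕ) : ℝ) := by
  induction x with
  | zero => simp
  | succ x ih =>
    have htel : ∑ t ∈ range x, (g (t + 2) - 2 * g (t + 1) + g t) =
        g (x + 1) - g x - (g 1 - g 0) := by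
      rw [← sum_range_sub (fun t => g (t + 1) - g t) x]
      exact sum_congr rfl fun t _ => by ring
    have hshift : ∑ t ∈ range x, (g (t + 2) - 2 * g (t + 1) + g t) * ((x + 1 - (t + 1) : ℕ) : ℝ) =
        ∑ t ∈ range x, (g (t + 2) - 2 * g (t + 1) + g t) * ((x - (t + 1) : ℕ) : ℝ) +
          ∑ t ∈ range x, (g (t + 2) - 2 * g (t + 1) + g t) := by
      rw [← sum_add_distrib]
      refine sum_congr rfl fun t ht => ?_
      rw [show x + 1 - (t + 1) = x - (t + 1) + 1 by have := mem_range.mp ht; omega]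
      push_cast
      ring
    rw [sum_range_succ, Nat.sub_self, Nat.cast_zero, mul_zero, add_zero, hshift, htel]
    push_cast
    linarith

theorem eq_affine_add_sum_hinge_of_le (g : ℕ → ℝ) {x M : ℕ} (hx : x ≤ M) :
    g x = g 0 + x * (g 1 - g 0) +
      ∑ t ∈ range M, (g (t + 2) - 2 * g (t + 1) + g t) * ((x - (t + 1) : ℕ) : ℝ) := by
  rw [← sum_subset (range_subset_range.mpr hx), ← eq_affine_add_sum_hinge]
  intro t _ ht
  rw [Nat.sub_eq_zero_of_le (by simp at ht; omega), Nat.cast_zero, mul_zero]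

section Majorization

variable {n : ℕ} {q : ℕ → ℝ} {a b : ℕ → ℕ}

theorem sum_mul_tsub_le_of_majorizes (hq : ∀ i, 0 ≤ q i) (hb : ∀ i j, i ≤ j → j < n → b j ≤ b i)
    (hmaj : ∀ j ≤ n, ∑ i ∈ range j, q i * b i ≤ ∑ i ∈ range j, q i * a i) (T : ℕ) :
    ∑ i ∈ range n, q i * ((b i - T : ℕ) : ℝ) ≤ ∑ i ∈ range n, q i * ((a i - T : ℕ) : ℝ) := by
  obtain ⟨j, hjn, hbig, hsmall⟩ : ∃ j ≤ n, (∀ i < j, T ≤ b i) ∧ ∀ i ∈ Ico j n, b i < T := by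
    classical
    have hex : ∃ j, n ≤ j ∨ b j < T := ⟨n, Or.inl le_rfl⟩
    refine ⟨Nat.find hex, Nat.find_min' hex (Or.inl le_rfl), fun i hi => ?_, fun i hi => ?_⟩
    · have := Nat.find_min hex hi
      omega
    · obtain ⟨hji, hin⟩ := mem_Ico.mp hi
      have := hb _ i hji hin
      have := Nat.find_spec hex
      omega
  calc ∑ i ∈ range n, q i * ((b i - T : ℕ) : ℝ)
      = ∑ i ∈ range j, q i * ((b i : ℝ) - T) := by
        rw [← sum_range_add_sum_Ico _ hjn, sum_eq_zero (s := Ico j n) fun i hi => by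
          rw [Nat.sub_eq_zero_of_le (hsmall i hi).le, Nat.cast_zero, mul_zero], add_zero]
        exact sum_congr rfl fun i hi => by rw [Nat.cast_sub (hbig i (mem_range.mp hi))]
    _ ≤ ∑ i ∈ range j, q i * ((a i : ℝ) - T) := by
        simp only [mul_sub, sum_sub_distrib]
        linarith [hmaj j hjn]
    _ ≤ ∑ i ∈ range j, q i * ((a i - T : ℕ) : ℝ) :=
        sum_le_sum fun i _ => mul_le_mul_of_nonneg_left (Nat.cast_sub_le_cast_tsub _ _) (hq i)
    _ ≤ ∑ i ∈ range n, q i * ((a i - T : ℕ) : ℝ) :=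
        sum_le_sum_of_subset_of_nonneg (range_subset_range.mpr hjn) fun i _ _ =>
          mul_nonneg (hq i) (Nat.cast_nonneg _)

theorem sum_mul_le_sum_mul_of_majorizes (g : ℕ → ℝ) (hg : ∀ t, 2 * g (t + 1) ≤ g t + g (t + 2))
    (hq : ∀ i, 0 ≤ q i) (hb : ∀ i j, i ≤ j → j < n → b j ≤ b i)
    (hmaj : ∀ j ≤ n, ∑ i ∈ range j, q i * b i ≤ ∑ i ∈ range j, q i * a i)
    (heq : ∑ i ∈ range n, q i * a i = ∑ i ∈ range n, q i * b i) :
    ∑ i ∈ range n, q i * g (b i) ≤ ∑ i ∈ range n, q i * g (a i) := by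
  set M := (range n).sup fun i => max (a i) (b i)
  have hexpand : ∀ c : ℕ → ℕ, (∀ i < n, c i ≤ M) → ∑ i ∈ range n, q i * g (c i) =
      g 0 * ∑ i ∈ range n, q i + (g 1 - g 0) * ∑ i ∈ range n, q i * c i +
        ∑ t ∈ range M, (g (t + 2) - 2 * g (t + 1) + g t) *
          ∑ i ∈ range n, q i * ((c i - (t + 1) : ℕ) : ℝ) := by
    intro c hc
    rw [sum_congr rfl fun i hi => by rw [eq_affine_add_sum_hinge_of_le g (hc i (mem_range.mp hi))]]
    simp only [mul_add, mul_sum, sum_add_distrib]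
    rw [sum_comm (s := range n)]
    congr 1
    · congr 1 <;> exact sum_congr rfl fun i _ => by ring
    · exact sum_congr rfl fun t _ => sum_congr rfl fun i _ => by ring
  have haM : ∀ i < n, a i ≤ M := fun i hi =>
    (le_max_left _ _).trans (le_sup (f := fun i => max (a i) (b i)) (mem_range.mpr hi))
  have hbM : ∀ i < n, b i ≤ M := fun i hi =>
    (le_max_right _ _).trans (le_sup (f := fun i => max (a i) (b i)) (mem_range.mpr hi))
  rw [hexpand b hbM, hexpand a haM, heq]
  exact add_le_add le_rfl (sum_le_sum fun t _ => mul_le_mul_of_nonneg_left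
    (sum_mul_tsub_le_of_majorizes hq hb hmaj (t + 1)) (by linarith [hg t]))

theorem prod_rpow_le_prod_rpow_of_majorizes {f : ℕ → ℝ} (hf : ∀ t, 0 < f t)
    (hlog : ∀ t, f (t + 1) ^ 2 ≤ f t * f (t + 2))
    (hq : ∀ i, 0 ≤ q i) (hb : ∀ i j, i ≤ j → j < n → b j ≤ b i)
    (hmaj : ∀ j ≤ n, ∑ i ∈ range j, q i * b i ≤ ∑ i ∈ range j, q i * a i)
    (heq : ∑ i ∈ range n, q i * a i = ∑ i ∈ range n, q i * b i) :
    ∏ i ∈ range n, f (b i) ^ q i ≤ ∏ i ∈ range n, f (a i) ^ q i := by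
  have hconv : ∀ t, 2 * Real.log (f (t + 1)) ≤ Real.log (f t) + Real.log (f (t + 2)) := fun t => by
    have := Real.log_le_log (pow_pos (hf (t + 1)) 2) (hlog t)
    rwa [Real.log_pow, Real.log_mul (hf t).ne' (hf (t + 2)).ne', Nat.cast_two] at this
  have hprod_pos : ∀ c : ℕ → ℕ, 0 < ∏ i ∈ range n, f (c i) ^ q i :=
    fun c => prod_pos fun i _ => Real.rpow_pos_of_pos (hf (c i)) _
  rw [← Real.log_le_log_iff (hprod_pos b) (hprod_pos a),
    Real.log_prod fun i _ => (Real.rpow_pos_of_pos (hf (b i)) _).ne',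
    Real.log_prod fun i _ => (Real.rpow_pos_of_pos (hf (a i)) _).ne']
  simp only [Real.log_rpow (hf _)]
  exact sum_mul_le_sum_mul_of_majorizes (fun t => Real.log (f t)) hconv hq hb hmaj heq

end Majorization

theorem integral_pow_succ_sq_le_mul {α : Type*} [MeasurableSpace α] {μ : Measure α} {f : α → ℝ}
    (hf : 0 ≤ᵐ[μ] f) {m : ℕ} (h₀ : Integrable (fun x => f x ^ m) μ)
    (h₁ : Integrable (fun x => f x ^ (m + 1)) μ) (h₂ : Integrable (fun x => f x ^ (m + 2)) μ) :
    (∫ x, f x ^ (m + 1) ∂μ) ^ 2 ≤ (∫ x, f x ^ m ∂μ) * ∫ x, f x ^ (m + 2) ∂μ := by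
  have hquad : ∀ t : ℝ, 0 ≤ (∫ x, f x ^ m ∂μ) * (t * t) + (-2 * ∫ x, f x ^ (m + 1) ∂μ) * t
      + ∫ x, f x ^ (m + 2) ∂μ := by
    intro t
    have hnonneg : 0 ≤ ∫ x, f x ^ m * (t - f x) ^ 2 ∂μ :=
      integral_nonneg_of_ae (hf.mono fun x hx => mul_nonneg (pow_nonneg hx m) (sq_nonneg _))
    have hexpand : (fun x => f x ^ m * (t - f x) ^ 2)
        = fun x => t * t * f x ^ m + -2 * t * f x ^ (m + 1) + f x ^ (m + 2) := by
      funext x; ring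
    have i₀ : Integrable (fun x => t * t * f x ^ m) μ := h₀.const_mul _
    have i₁ : Integrable (fun x => -2 * t * f x ^ (m + 1)) μ := h₁.const_mul _
    rw [hexpand, integral_add (f := fun x => t * t * f x ^ m + -2 * t * f x ^ (m + 1))
      (i₀.add i₁) h₂, integral_add i₀ i₁, integral_const_mul, integral_const_mul] at hnonneg
    linarith
  have := discrim_le_zero hquad
  rw [discrim] at this
  linarith

noncomputable def unitCubeSumMoment (k m : ℕ) : ℝ := ∫ x : Fin k → I, (∑ i, (x i : ℝ)) ^ m

theorem integrable_sum_coe_pow (k m : ℕ) :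
    Integrable (fun x : Fin k → I => (∑ i, (x i : ℝ)) ^ m) :=
  (by fun_prop : Continuous _).integrable_of_hasCompactSupport (HasCompactSupport.of_compactSpace _)

theorem integral_unitInterval_pow (c : ℕ) : ∫ t : I, (t : ℝ) ^ c = 1 / (c + 1) := by
  rw [volume_def, integral_subtype_comap measurableSet_Icc (fun t : ℝ => t ^ c),
    integral_Icc_eq_integral_Ioc, ← intervalIntegral.integral_of_le zero_le_one, integral_pow]
  simp

theorem unitCubeSumMoment_succ_left (k m : ℕ) :
    unitCubeSumMoment (k + 1) m =
      ∑ p ∈ antidiagonal m, m.choose p.1 * unitCubeSumMoment k p.1 / (p.2 + 1) := by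
  have hsplit := volume_preserving_piFinSuccAbove (fun _ : Fin (k + 1) => I) 0
  have hcomp : unitCubeSumMoment (k + 1) m = ∫ x : Fin (k + 1) → I,
      (fun p : I × (Fin k → I) => ((∑ i, (p.2 i : ℝ)) + p.1) ^ m)
        (MeasurableEquiv.piFinSuccAbove (fun _ => I) 0 x) := by
    refine integral_congr_ae (Filter.Eventually.of_forall fun x => ?_)
    simp [MeasurableEquiv.piFinSuccAbove_apply, Fin.insertNthEquiv_zero, Fin.consEquiv, Fin.tail,
      Fin.sum_univ_succ, add_comm]
  rw [hcomp]
  refine (hsplit.integral_comp'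
    (fun p : I × (Fin k → I) => ((∑ i, (p.2 i : ℝ)) + p.1) ^ m)).trans ?_
  rw [Measure.volume_eq_prod]
  have hbinom : ∀ p : I × (Fin k → I), ((∑ i, (p.2 i : ℝ)) + p.1) ^ m =
      ∑ q ∈ antidiagonal m, (m.choose q.1 : ℝ) * ((p.1 : ℝ) ^ q.2 * (∑ i, (p.2 i : ℝ)) ^ q.1) := by
    intro p
    rw [(Commute.all _ _).add_pow']
    refine sum_congr rfl fun q _ => ?_
    rw [nsmul_eq_mul, mul_comm ((p.1 : ℝ) ^ q.2)]
  rw [integral_congr_ae (Filter.Eventually.of_forall hbinom), integral_finsetSum]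
  · refine sum_congr rfl fun q _ => ?_
    rw [integral_const_mul, integral_prod_mul (fun t : I => (t : ℝ) ^ q.2)
      (fun y : Fin k → I => (∑ i, (y i : ℝ)) ^ q.1), integral_unitInterval_pow, unitCubeSumMoment]
    field_simp
  · intro q _
    have hpow : Integrable (fun t : I => (t : ℝ) ^ q.2) :=
      (by fun_prop : Continuous _).integrable_of_hasCompactSupport (.of_compactSpace _)
    exact (hpow.mul_prod (integrable_sum_coe_pow k q.1)).const_mul _

theorem unitCubeSumMoment_eq (k m : ℕ) :
    unitCubeSumMoment k m = m ! * k ! * Nat.stirlingSecond (m + k) k / (m + k)! := by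
  induction k generalizing m with
  | zero => cases m <;> simp [unitCubeSumMoment]
  | succ k ih =>
    have hstir : ((k + 1) * Nat.stirlingSecond (m + k + 1) (k + 1) : ℝ) = ∑ p ∈ antidiagonal m,
        ((m + k + 1).choose (p.1 + k) : ℝ) * Nat.stirlingSecond (p.1 + k) k := by
      exact_mod_cast Nat.succ_mul_stirlingSecond_add_succ m k
    rw [unitCubeSumMoment_succ_left, ← add_assoc, Nat.factorial_succ, Nat.cast_mul, Nat.cast_succ,
      mul_comm ((k : ℝ) + 1), ← mul_assoc, mul_assoc _ (_ : ℝ), hstir, mul_sum, sum_div]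
    refine sum_congr rfl fun p hp => ?_
    obtain ⟨i, j⟩ := p
    obtain rfl : i + j = m := mem_antidiagonal.mp hp
    rw [ih, show i + j + k + 1 = (i + k) + (j + 1) by ring, Nat.cast_add_choose,
      Nat.cast_add_choose, Nat.factorial_succ j]
    push_cast
    field_simp

theorem unitCubeSumMoment_eq_div_choose (k m : ℕ) :
    unitCubeSumMoment k m = Nat.stirlingSecond (m + k) k / (m + k).choose k := by
  rw [unitCubeSumMoment_eq, ← Nat.choose_symm_add, Nat.cast_add_choose]
  field_simp

theorem unitCubeSumMoment_pos {k : ℕ} (hk : 1 ≤ k) (m : ℕ) : 0 < unitCubeSumMoment k m := by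
  obtain ⟨k, rfl⟩ := Nat.exists_eq_add_of_le' hk
  rw [unitCubeSumMoment_eq_div_choose]
  exact div_pos (mod_cast Nat.stirlingSecond_add_succ_pos m k)
    (mod_cast Nat.choose_pos (Nat.le_add_left _ _))

theorem unitCubeSumMoment_sq_le (k m : ℕ) :
    unitCubeSumMoment k (m + 1) ^ 2 ≤ unitCubeSumMoment k m * unitCubeSumMoment k (m + 2) :=
  integral_pow_succ_sq_le_mul (ae_of_all _ fun x => sum_nonneg fun i _ => (x i).2.1)
    (integrable_sum_coe_pow k m) (integrable_sum_coe_pow k (m + 1))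
    (integrable_sum_coe_pow k (m + 2))

theorem stirling2_ratio_majorization_general (k : ℕ) (hk : 1 ≤ k) (n : ℕ)
    (q : ℕ → ℝ) (a b : ℕ → ℕ)
    (hq : ∀ i, 0 ≤ q i)
    (hb : ∀ i j, i ≤ j → j < n → b j ≤ b i)
    (hmaj : ∀ j, 1 ≤ j → j ≤ n - 1 →
      ∑ i ∈ Finset.range j, q i * (b i : ℝ) ≤ ∑ i ∈ Finset.range j, q i * (a i : ℝ))
    (heq : ∑ i ∈ Finset.range n, q i * (a i : ℝ) = ∑ i ∈ Finset.range n, q i * (b i : ℝ)) :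
    ∏ i ∈ Finset.range n, ((S (b i + k) k : ℝ) / ((b i + k).choose k : ℝ)) ^ (q i) ≤
      ∏ i ∈ Finset.range n, ((S (a i + k) k : ℝ) / ((a i + k).choose k : ℝ)) ^ (q i) := by
  have hratio : ∀ x, (S (x + k) k : ℝ) / ((x + k).choose k : ℝ) = unitCubeSumMoment k x :=
    fun x => by rw [S_eq_stirlingSecond, unitCubeSumMoment_eq_div_choose]
  have hmaj' : ∀ j ≤ n, ∑ i ∈ range j, q i * b i ≤ ∑ i ∈ range j, q i * a i := by
    intro j hj
    rcases Nat.eq_zero_or_pos j with rfl | hj₀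
    · simp
    rcases hj.lt_or_eq with hjn | rfl
    · exact hmaj j hj₀ (by omega)
    · exact heq.ge
  simp only [hratio]
  exact prod_rpow_le_prod_rpow_of_majorizes (unitCubeSumMoment_pos hk) (unitCubeSumMoment_sq_le k)
    hq hb hmaj' heq

/-- The weighted-majorization inequality for the ratios `S(a+k,k)/C(a+k,k)`. -/
theorem stirling2_ratio_majorization (k : ℕ) (hk : 1 ≤ k) (n : ℕ)
    (q : ℕ → ℝ) (a b : ℕ → ℕ)
    (hq : ∀ i, 0 ≤ q i)
    (ha : ∀ i j, i ≤ j → j < n → a j ≤ a i)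
    (hb : ∀ i j, i ≤ j → j < n → b j ≤ b i)
    (hmaj : ∀ j, 1 ≤ j → j ≤ n - 1 →
      ∑ i ∈ Finset.range j, q i * (b i : ℝ) ≤ ∑ i ∈ Finset.range j, q i * (a i : ℝ))
    (heq : ∑ i ∈ Finset.range n, q i * (a i : ℝ) = ∑ i ∈ Finset.range n, q i * (b i : ℝ)) :
    ∏ i ∈ Finset.range n, ((S (b i + k) k : ℝ) / ((b i + k).choose k : ℝ)) ^ (q i) ≤
      ∏ i ∈ Finset.range n, ((S (a i + k) k : ℝ) / ((a i + k).choose k : ℝ)) ^ (q i) :=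
  stirling2_ratio_majorization_general k hk n q a b hq hb hmaj heq
end

section
/- For any fixed integer k ≥ 1 and nonnegative integers a_1,…,a_m, the m×m matrix with (i,j)-entry S(a_i+a_j+k, k)/C(a_i+a_j+k, k) has nonnegative determinant (indeed it is positive semidefinite). -/
/-!
Let `A` be the averaging operator `(A f) s = ∫₀¹ f (s + u) du` on `C(ℝ, ℝ)`. Then
`f ↦ (Aᵏ f) 0` is the mean of `f (t₁ + ⋯ + t_k)` over the unit cube `[0,1]ᵏ`; it is linear and
nonnegative on squares, so the matrix of its values at `x ^ aᵢ * x ^ aⱼ` is positive semidefinite.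
Since `A xⁿ = Δ xⁿ⁺¹ / (n + 1)` and `A` commutes with translations,
`Aᵏ xⁿ = n! / (n + k)! • Δᵏ xⁿ⁺ᵏ`, and `Δᵏ x^N` at `0` equals `k! S(N, k)`.
Hence `(Aᵏ xⁿ) 0 = S(n + k, k) / C(n + k, k)`.
-/

open fwdDiff
open scoped Nat

section ForwardDifferences

variable {R : Type*} [CommRing R]

theorem fwdDiff_iter_succ_id_mul (f : R → R) (k : ℕ) :
    Δ_[1] ^[k + 1] (fun x ↦ x * f x) =
      fun x ↦ x * Δ_[1] ^[k + 1] f x + (k + 1) * Δ_[1] ^[k] f (x + 1) := by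
  induction k with
  | zero =>
    funext x
    simp only [zero_add, Function.iterate_one, Function.iterate_zero_apply, fwdDiff]
    push_cast
    ring
  | succ k ih =>
    rw [Function.iterate_succ_apply', ih]
    funext x
    simp only [Function.iterate_succ_apply', fwdDiff]
    push_cast
    ring

theorem fwdDiff_iter_pow_apply_zero (n k : ℕ) :
    Δ_[1] ^[k] (fun x : R ↦ x ^ n) 0 = k ! * S n k := by
  induction n generalizing k with
  | zero =>
    cases k with
    | zero => simp [S]
    | succ k => rw [fwdDiff_iter_pow_eq_zero_of_lt k.succ_pos]; simp [S]
  | succ n ih =>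
    cases k with
    | zero => simp [S]
    | succ k =>
      have hshift : Δ_[1] ^[k] (fun x : R ↦ x ^ n) 1 =
          Δ_[1] ^[k] (fun x : R ↦ x ^ n) 0 + Δ_[1] ^[k + 1] (fun x : R ↦ x ^ n) 0 := by
        rw [Function.iterate_succ_apply', fwdDiff, zero_add, add_sub_cancel]
      have hleibniz := congrFun (fwdDiff_iter_succ_id_mul (fun x : R ↦ x ^ n) k) 0
      simp only [← pow_succ', zero_mul, zero_add, hshift] at hleibniz
      rw [hleibniz, ih, ih, S, Nat.factorial_succ]
      push_cast
      ring

end ForwardDifferences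

open ContinuousMap

noncomputable def unitAverage : C(ℝ, ℝ) →ₗ[ℝ] C(ℝ, ℝ) where
  toFun f := ⟨fun s ↦ ∫ u in (0 : ℝ)..1, f (s + u),
    intervalIntegral.continuous_parametric_intervalIntegral_of_continuous' (by fun_prop) 0 1⟩
  map_add' f g := by
    ext s
    exact intervalIntegral.integral_add (by apply Continuous.intervalIntegrable; fun_prop)
      (by apply Continuous.intervalIntegrable; fun_prop)
  map_smul' c f := by
    ext s
    exact intervalIntegral.integral_smul c _

theorem unitAverage_apply (f : C(ℝ, ℝ)) (s : ℝ) :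
    unitAverage f s = ∫ u in (0 : ℝ)..1, f (s + u) := rfl

theorem unitAverage_nonneg {f : C(ℝ, ℝ)} (hf : 0 ≤ f) : 0 ≤ unitAverage f := fun s ↦
  intervalIntegral.integral_nonneg zero_le_one fun u _ ↦ hf (s + u)

theorem unitAverage_comp_addRight (f : C(ℝ, ℝ)) (c : ℝ) :
    unitAverage (f.comp (ContinuousMap.addRight c)) =
      (unitAverage f).comp (ContinuousMap.addRight c) := by
  ext s
  simp only [unitAverage_apply, comp_apply, coe_addRight, add_right_comm]

theorem unitAverage_monomial (n : ℕ) :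
    unitAverage (ContinuousMap.id ℝ ^ n) = ((n : ℝ) + 1)⁻¹ •
      ((ContinuousMap.id ℝ ^ (n + 1)).comp (ContinuousMap.addRight 1) -
        ContinuousMap.id ℝ ^ (n + 1)) := by
  ext s
  simp only [unitAverage_apply, pow_apply, id_apply, ContinuousMap.smul_apply,
    ContinuousMap.sub_apply, comp_apply, coe_addRight, smul_eq_mul]
  rw [intervalIntegral.integral_comp_add_left (· ^ n), integral_pow, add_zero]
  field_simp

theorem unitAverage_pow_nonneg (k : ℕ) {f : C(ℝ, ℝ)} (hf : 0 ≤ f) :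
    0 ≤ (unitAverage ^ k) f := by
  induction k with
  | zero => exact hf
  | succ k ih => rw [pow_succ', Module.End.mul_apply]; exact unitAverage_nonneg ih

theorem unitAverage_pow_comp_addRight (k : ℕ) (f : C(ℝ, ℝ)) (c : ℝ) :
    (unitAverage ^ k) (f.comp (ContinuousMap.addRight c)) =
      ((unitAverage ^ k) f).comp (ContinuousMap.addRight c) := by
  induction k with
  | zero => rfl
  | succ k ih =>
    rw [pow_succ', Module.End.mul_apply, Module.End.mul_apply, ih, unitAverage_comp_addRight]

theorem unitAverage_pow_monomial_apply (k n : ℕ) (t : ℝ) :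
    (unitAverage ^ k) (ContinuousMap.id ℝ ^ n) t =
      n ! / (n + k)! * Δ_[1] ^[k] (fun x : ℝ ↦ x ^ (n + k)) t := by
  induction k generalizing n t with
  | zero =>
    have : (n ! : ℝ) ≠ 0 := by positivity
    simp [this]
  | succ k ih =>
    rw [pow_succ, Module.End.mul_apply, unitAverage_monomial, map_smul, map_sub,
      unitAverage_pow_comp_addRight]
    simp only [ContinuousMap.smul_apply, ContinuousMap.sub_apply, comp_apply, coe_addRight,
      smul_eq_mul, ih, Function.iterate_succ_apply', fwdDiff, show n + 1 + k = n + (k + 1) by ring,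
      Nat.factorial_succ]
    push_cast
    field_simp

noncomputable def cubeMean (k : ℕ) : C(ℝ, ℝ) →ₗ[ℝ] ℝ :=
  (ContinuousMap.evalCLM (R := ℝ) 0 : C(ℝ, ℝ) →L[ℝ] ℝ).toLinearMap ∘ₗ unitAverage ^ k

theorem cubeMean_apply (k : ℕ) (f : C(ℝ, ℝ)) : cubeMean k f = (unitAverage ^ k) f 0 := rfl

theorem cubeMean_monomial (n k : ℕ) :
    cubeMean k (ContinuousMap.id ℝ ^ n) = S (n + k) k / (n + k).choose k := by
  rw [cubeMean_apply, unitAverage_pow_monomial_apply, fwdDiff_iter_pow_apply_zero,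
    Nat.cast_choose ℝ (Nat.le_add_left k n), Nat.add_sub_cancel]
  field_simp

theorem cubeMean_mul_self_nonneg (k : ℕ) (f : C(ℝ, ℝ)) : 0 ≤ cubeMean k (f * f) :=
  unitAverage_pow_nonneg k (fun x ↦ by simpa using mul_self_nonneg (f x)) 0

theorem Matrix.posSemidef_of_map_mul_self_nonneg {ι A : Type*} [Fintype ι] [CommRing A]
    [Algebra ℝ A] (L : A →ₗ[ℝ] ℝ) (hL : ∀ f, 0 ≤ L (f * f)) (f : ι → A) :
    (Matrix.of fun i j ↦ L (f i * f j)).PosSemidef := by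
  refine .of_dotProduct_mulVec_nonneg ?_ fun x ↦ ?_
  · ext i j
    simp [mul_comm]
  · refine (hL (∑ i, x i • f i)).trans_eq ?_
    rw [Finset.sum_mul_sum, map_sum]
    simp only [smul_mul_smul_comm, map_sum, map_smul, smul_eq_mul, dotProduct, mulVec,
      Matrix.of_apply, star_trivial, Finset.mul_sum]
    exact Finset.sum_congr rfl fun i _ ↦ Finset.sum_congr rfl fun j _ ↦ by ring

theorem stirling2_ratio_matrix_det_nonneg_general (k : ℕ) (m : ℕ) (a : Fin m → ℕ) :
    0 ≤ (Matrix.of fun i j : Fin m =>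
          (S (a i + a j + k) k : ℝ) / ((a i + a j + k).choose k : ℝ)).det ∧
      (Matrix.of fun i j : Fin m =>
          (S (a i + a j + k) k : ℝ) / ((a i + a j + k).choose k : ℝ)).PosSemidef := by
  have hpsd := Matrix.posSemidef_of_map_mul_self_nonneg (cubeMean k) (cubeMean_mul_self_nonneg k)
    fun i ↦ ContinuousMap.id ℝ ^ a i
  simp only [← pow_add, cubeMean_monomial] at hpsd
  exact ⟨hpsd.det_nonneg, hpsd⟩

/-- The matrix with entries `S(a_i+a_j+k,k)/C(a_i+a_j+k,k)` has nonnegative determinant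
(indeed it is positive semidefinite). -/
theorem stirling2_ratio_matrix_det_nonneg (k : ℕ) (hk : 1 ≤ k) (m : ℕ) (a : Fin m → ℕ) :
    0 ≤ (Matrix.of fun i j : Fin m =>
          (S (a i + a j + k) k : ℝ) / ((a i + a j + k).choose k : ℝ)).det ∧
      (Matrix.of fun i j : Fin m =>
          (S (a i + a j + k) k : ℝ) / ((a i + a j + k).choose k : ℝ)).PosSemidef :=
  stirling2_ratio_matrix_det_nonneg_general k m a
end
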